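/- arXiv:1207.4433 — 4 statements merged into one kernel-verified Lean document; each statement's English description precedes it below -/
import Mathlib

section
/- Let Z be a real topological vector space and C ⊆ Z a convex cone with 0 ∈ C. Then the family G(Z,C) = {A ⊆ Z : A = cl(co(A + C))}, partially ordered by A ≤ B ⟺ A ⊇ B, is a complete lattice. For every nonempty family ℬ ⊆ G(Z,C), the infimum of ℬ is cl(co(⋃_{B∈ℬ} B)) and the supremum of ℬ is ⋂_{B∈ℬ} B; the infimum of the empty family is ∅ and the supremum of the empty family is Z. -/
open Set Pointwise Topology

/-! Because `0 ∈ C`, `A = cl co (A + C)` says exactly that `A` is closed, convex and satisfies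
`A + C ⊆ A`. All three properties survive arbitrary intersections, which gives the suprema. For the
infima, `A + C ⊆ A` survives unions and passes from a set to the closure of its convex hull,
since translations are homeomorphisms commuting with `co`. -/

section

variable {𝕜 Z : Type*} [Field 𝕜] [PartialOrder 𝕜] [AddCommGroup Z] [Module 𝕜 Z]
  [TopologicalSpace Z] [IsTopologicalAddGroup Z]

theorem eq_closure_convexHull_add_iff [ContinuousConstSMul 𝕜 Z] {A C : Set Z}
    (hC0 : (0 : Z) ∈ C) :
    A = closure (convexHull 𝕜 (A + C)) ↔ IsClosed A ∧ Convex 𝕜 A ∧ A + C ⊆ A := by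
  constructor
  · intro hA
    refine ⟨hA ▸ isClosed_closure, hA ▸ (convex_convexHull 𝕜 _).closure, ?_⟩
    calc A + C ⊆ closure (convexHull 𝕜 (A + C)) := (subset_convexHull 𝕜 _).trans subset_closure
      _ = A := hA.symm
  · rintro ⟨hclosed, hconv, hsub⟩
    refine subset_antisymm ?_ (closure_minimal (convexHull_min hsub hconv) hclosed)
    exact (subset_add_left A hC0).trans ((subset_convexHull 𝕜 _).trans subset_closure)

theorem closure_convexHull_add_subset {s t : Set Z} (h : s + t ⊆ s) :
    closure (convexHull 𝕜 s) + t ⊆ closure (convexHull 𝕜 s) := by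
  rintro _ ⟨x, hx, c, hc, rfl⟩
  have htranslate : c +ᵥ s ⊆ s := by
    rintro _ ⟨y, hy, rfl⟩
    exact h ⟨y, hy, c, hc, add_comm y c⟩
  have hx' : c +ᵥ x ∈ closure (convexHull 𝕜 (c +ᵥ s)) := by
    rw [convexHull_vadd, closure_vadd]
    exact vadd_mem_vadd_set hx
  rw [vadd_eq_add, add_comm] at hx'
  exact closure_mono (convexHull_mono htranslate) hx'

end

theorem sUnion_add_subset {Z : Type*} [AddCommGroup Z] {𝒜 : Set (Set Z)} {C : Set Z}
    (h : ∀ A ∈ 𝒜, A + C ⊆ A) : ⋃₀ 𝒜 + C ⊆ ⋃₀ 𝒜 := by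
  rw [sUnion_add]
  exact iUnion₂_subset fun A hA => (h A hA).trans (subset_sUnion_of_mem hA)

theorem sInter_add_subset_sInter {Z : Type*} [AddCommGroup Z] {𝒜 : Set (Set Z)} {C : Set Z}
    (h : ∀ A ∈ 𝒜, A + C ⊆ A) : ⋂₀ 𝒜 + C ⊆ ⋂₀ 𝒜 :=
  (sInter_add_subset 𝒜 C).trans <|
    subset_sInter fun A hA => (biInter_subset_of_mem hA).trans (h A hA)

theorem G_is_complete_lattice_general {Z : Type*} [AddCommGroup Z] [Module ℝ Z] [TopologicalSpace Z]
    [IsTopologicalAddGroup Z] [ContinuousSMul ℝ Z]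
    (C : Set Z)
    (hC0 : (0 : Z) ∈ C) :
    (∀ 𝒜 ⊆ {A : Set Z | A = closure (convexHull ℝ (A + C))}, 𝒜.Nonempty →
      -- infimum of a nonempty family is `cl co ⋃ 𝒜`
      (closure (convexHull ℝ (⋃₀ 𝒜)) ∈ {A : Set Z | A = closure (convexHull ℝ (A + C))} ∧
        (∀ A ∈ 𝒜, A ⊆ closure (convexHull ℝ (⋃₀ 𝒜))) ∧
        (∀ B ∈ {A : Set Z | A = closure (convexHull ℝ (A + C))},
          (∀ A ∈ 𝒜, A ⊆ B) → closure (convexHull ℝ (⋃₀ 𝒜)) ⊆ B)) ∧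
      -- supremum of a nonempty family is `⋂ 𝒜`
      ((⋂₀ 𝒜) ∈ {A : Set Z | A = closure (convexHull ℝ (A + C))} ∧
        (∀ A ∈ 𝒜, ⋂₀ 𝒜 ⊆ A) ∧
        (∀ B ∈ {A : Set Z | A = closure (convexHull ℝ (A + C))},
          (∀ A ∈ 𝒜, B ⊆ A) → B ⊆ ⋂₀ 𝒜))) ∧
    -- infimum of the empty family is `∅`, the greatest element w.r.t. `≤` (= `⊇`)
    ((∅ : Set Z) ∈ {A : Set Z | A = closure (convexHull ℝ (A + C))} ∧
      ∀ B ∈ {A : Set Z | A = closure (convexHull ℝ (A + C))}, (∅ : Set Z) ⊆ B) ∧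
    -- supremum of the empty family is `Z`, the least element w.r.t. `≤` (= `⊇`)
    ((univ : Set Z) ∈ {A : Set Z | A = closure (convexHull ℝ (A + C))} ∧
      ∀ B ∈ {A : Set Z | A = closure (convexHull ℝ (A + C))}, B ⊆ (univ : Set Z)) := by
  simp only [mem_ofPred_eq, eq_closure_convexHull_add_iff hC0]
  refine ⟨fun 𝒜 h𝒜 _ => ⟨⟨?_, ?_, ?_⟩, ?_, fun A => sInter_subset_of_mem, fun B _ => subset_sInter⟩,
    ⟨⟨isClosed_empty, convex_empty, by rw [empty_add]⟩, fun B _ => empty_subset B⟩,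
    ⟨isClosed_univ, convex_univ, subset_univ _⟩, fun B _ => subset_univ B⟩
  · exact ⟨isClosed_closure, (convex_convexHull ℝ _).closure,
      closure_convexHull_add_subset (sUnion_add_subset fun A hA => (h𝒜 hA).2.2)⟩
  · exact fun A hA => (subset_sUnion_of_mem hA).trans ((subset_convexHull ℝ _).trans subset_closure)
  · rintro B ⟨hBclosed, hBconv, -⟩ hub
    exact closure_minimal (convexHull_min (sUnion_subset hub) hBconv) hBclosed
  · exact ⟨isClosed_sInter fun A hA => (h𝒜 hA).1, convex_sInter fun A hA => (h𝒜 hA).2.1,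
      sInter_add_subset_sInter fun A hA => (h𝒜 hA).2.2⟩

/-- The family `G(Z,C) = {A ⊆ Z | A = cl(co(A + C))}`, partially ordered by reverse inclusion
`A ≤ B ⟺ A ⊇ B`, is a complete lattice: every nonempty family `𝒜 ⊆ G(Z,C)` has an infimum,
namely `cl co ⋃ 𝒜` (the greatest lower bound w.r.t. `≤`, i.e. the `⊇`-largest member of `G(Z,C)`
below every member of `𝒜`), and a supremum, namely `⋂ 𝒜`; the infimum of the empty family is
`∅` (the top element) and the supremum of the empty family is `Z` (the bottom element). -/
theorem G_is_complete_lattice {Z : Type*} [AddCommGroup Z] [Module ℝ Z] [TopologicalSpace Z]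
    [IsTopologicalAddGroup Z] [ContinuousSMul ℝ Z]
    (C : Set Z) (hCconv : Convex ℝ C) (hCcone : ∀ t : ℝ, 0 < t → ∀ z ∈ C, t • z ∈ C)
    (hC0 : (0 : Z) ∈ C) :
    (∀ 𝒜 ⊆ {A : Set Z | A = closure (convexHull ℝ (A + C))}, 𝒜.Nonempty →
      -- infimum of a nonempty family is `cl co ⋃ 𝒜`
      (closure (convexHull ℝ (⋃₀ 𝒜)) ∈ {A : Set Z | A = closure (convexHull ℝ (A + C))} ∧
        (∀ A ∈ 𝒜, A ⊆ closure (convexHull ℝ (⋃₀ 𝒜))) ∧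
        (∀ B ∈ {A : Set Z | A = closure (convexHull ℝ (A + C))},
          (∀ A ∈ 𝒜, A ⊆ B) → closure (convexHull ℝ (⋃₀ 𝒜)) ⊆ B)) ∧
      -- supremum of a nonempty family is `⋂ 𝒜`
      ((⋂₀ 𝒜) ∈ {A : Set Z | A = closure (convexHull ℝ (A + C))} ∧
        (∀ A ∈ 𝒜, ⋂₀ 𝒜 ⊆ A) ∧
        (∀ B ∈ {A : Set Z | A = closure (convexHull ℝ (A + C))},
          (∀ A ∈ 𝒜, B ⊆ A) → B ⊆ ⋂₀ 𝒜))) ∧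
    -- infimum of the empty family is `∅`, the greatest element w.r.t. `≤` (= `⊇`)
    ((∅ : Set Z) ∈ {A : Set Z | A = closure (convexHull ℝ (A + C))} ∧
      ∀ B ∈ {A : Set Z | A = closure (convexHull ℝ (A + C))}, (∅ : Set Z) ⊆ B) ∧
    -- supremum of the empty family is `Z`, the least element w.r.t. `≤` (= `⊇`)
    ((univ : Set Z) ∈ {A : Set Z | A = closure (convexHull ℝ (A + C))} ∧
      ∀ B ∈ {A : Set Z | A = closure (convexHull ℝ (A + C))}, B ⊆ (univ : Set Z)) :=
  G_is_complete_lattice_general C hC0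
end

section
/- (Lagrange functions of the scalarized problems.) For all x ∈ X, y* ∈ Y* and z* ∈ C+∖{0}: λ_{z*}(x,y*) = φ_{l,z*}(x,y*), i.e. φ_{f,z*}(x) + φ_{g,y*}(x) = inf{z*(z) : z ∈ l(x,y*,z*)}. -/
/-!
Scalarization by `z*` turns the closed Minkowski sum defining the Lagrangian into a sum of
infima: closures do not change the infimum of a continuous functional, an empty summand makes
both sides `+∞` (this is exactly the convention `(+∞) + (−∞) = +∞`), and otherwise infima of
sums are sums of infima. Finally, `z* ≠ 0` is onto `ℝ`, so the infimum of `z*` over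
`S_{(y*,z*)}(y)` is `y*(y)`, and the union over `y ∈ g(x)` scalarizes to `φ_{g,y*}(x)`.
-/

open Set Pointwise Topology Filter

noncomputable section

variable {X Y Z : Type*}
  [AddCommGroup X] [Module ℝ X] [TopologicalSpace X] [IsTopologicalAddGroup X]
  [ContinuousSMul ℝ X] [LocallyConvexSpace ℝ X]
  [AddCommGroup Y] [Module ℝ Y] [TopologicalSpace Y] [IsTopologicalAddGroup Y]
  [ContinuousSMul ℝ Y] [LocallyConvexSpace ℝ Y]
  [AddCommGroup Z] [Module ℝ Z] [TopologicalSpace Z] [IsTopologicalAddGroup Z]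
  [ContinuousSMul ℝ Z] [LocallyConvexSpace ℝ Z]

/-- The positive dual cone `C⁺`. -/
def posDual (C : Set Z) : Set (Z →L[ℝ] ℝ) := {z' | ∀ z ∈ C, 0 ≤ z' z}

/-- The halfspace `S(z*) = {z | 0 ≤ z*(z)}`. -/
def SPos (z' : Z →L[ℝ] ℝ) : Set Z := {z | 0 ≤ z' z}

/-- `S_{(y*,z*)}(y) = {z | y*(y) ≤ z*(z)}`. -/
def SMap (y' : Y →L[ℝ] ℝ) (z' : Z →L[ℝ] ℝ) (y : Y) : Set Z := {z | y' y ≤ z' z}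

/-- Scalarization: `inf {z*(z) | z ∈ A}` in `EReal` (inf ∅ = +∞). -/
def scal (z' : Z →L[ℝ] ℝ) (A : Set Z) : EReal := ⨅ z ∈ A, (z' z : EReal)

open Classical in
/-- Addition on `EReal` with the convention `(+∞) + (−∞) = (−∞) + (+∞) = +∞`. -/
def eadd (a b : EReal) : EReal := if a = ⊤ ∨ b = ⊤ then ⊤ else a + b

/-- The set-valued Lagrangian `l(x,y*,z*) = f(x) ⊕ cl ⋃_{y ∈ g(x)} S_{(y*,z*)}(y)`. -/
def lag (f : X → Set Z) (g : X → Set Y) (x : X) (y' : Y →L[ℝ] ℝ) (z' : Z →L[ℝ] ℝ) :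
    Set Z :=
  closure (f x + closure (⋃ y ∈ g x, SMap y' z' y))

/-- The dual objective `h(y*,z*) = cl ⋃_x l(x,y*,z*)`. -/
def dualObj (f : X → Set Z) (g : X → Set Y) (y' : Y →L[ℝ] ℝ) (z' : Z →L[ℝ] ℝ) : Set Z :=
  closure (⋃ x, lag f g x y' z')

/-- The value function `v(y) = cl ⋃ {f(x) | y ∈ g(x)}`. -/
def valFn (f : X → Set Z) (g : X → Set Y) (y : Y) : Set Z :=
  closure (⋃ x ∈ {x | y ∈ g x}, f x)

section Scalarization

variable {E F : Type*} [AddCommGroup E] [Module ℝ E] [TopologicalSpace E]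
  [AddCommGroup F] [Module ℝ F] [TopologicalSpace F]

lemma scal_le_of_mem {e' : E →L[ℝ] ℝ} {A : Set E} {e : E} (he : e ∈ A) :
    scal e' A ≤ e' e :=
  iInf₂_le e he

lemma scal_lt_iff {e' : E →L[ℝ] ℝ} {A : Set E} {q : EReal} :
    scal e' A < q ↔ ∃ e ∈ A, (e' e : EReal) < q := by
  simp only [scal, iInf_lt_iff, exists_prop]

@[simp]
lemma scal_empty (e' : E →L[ℝ] ℝ) : scal e' (∅ : Set E) = ⊤ := by
  simp [scal]

lemma scal_ne_top {e' : E →L[ℝ] ℝ} {A : Set E} (hA : A.Nonempty) : scal e' A ≠ ⊤ :=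
  let ⟨_, he⟩ := hA
  ((scal_le_of_mem he).trans_lt (EReal.coe_lt_top _)).ne

lemma scal_closure (e' : E →L[ℝ] ℝ) (A : Set E) : scal e' (closure A) = scal e' A := by
  refine le_antisymm (iInf₂_mono' fun e he => ⟨e, subset_closure he, le_rfl⟩)
    (le_iInf₂ fun e he => ?_)
  have hclosed : IsClosed {e : E | scal e' A ≤ e' e} :=
    isClosed_le continuous_const (continuous_coe_real_ereal.comp e'.continuous)
  exact closure_minimal (fun _ => scal_le_of_mem) hclosed he

lemma scal_add_of_nonempty {e' : E →L[ℝ] ℝ} {A B : Set E} (hA : A.Nonempty) (hB : B.Nonempty) :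
    scal e' (A + B) = scal e' A + scal e' B := by
  refine le_antisymm ?_ (le_iInf₂ ?_)
  · refine EReal.le_add_of_forall_gt (.inr (scal_ne_top hB)) (.inl (scal_ne_top hA))
      fun a ha b hb => ?_
    obtain ⟨u, hu, hua⟩ := scal_lt_iff.1 ha
    obtain ⟨v, hv, hvb⟩ := scal_lt_iff.1 hb
    calc scal e' (A + B) ≤ e' (u + v) := scal_le_of_mem (add_mem_add hu hv)
      _ = e' u + e' v := by rw [map_add, EReal.coe_add]
      _ ≤ a + b := add_le_add hua.le hvb.le
  · rintro _ ⟨u, hu, v, hv, rfl⟩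
    rw [map_add, EReal.coe_add]
    exact add_le_add (scal_le_of_mem hu) (scal_le_of_mem hv)

lemma scal_add (e' : E →L[ℝ] ℝ) (A B : Set E) :
    scal e' (A + B) = eadd (scal e' A) (scal e' B) := by
  rcases A.eq_empty_or_nonempty with rfl | hA
  · simp [eadd]
  rcases B.eq_empty_or_nonempty with rfl | hB
  · simp [eadd]
  rw [eadd, if_neg (not_or.2 ⟨scal_ne_top hA, scal_ne_top hB⟩), scal_add_of_nonempty hA hB]

lemma scal_biUnion {ι : Type*} (e' : E →L[ℝ] ℝ) (s : Set ι) (A : ι → Set E) :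
    scal e' (⋃ i ∈ s, A i) = ⨅ i ∈ s, scal e' (A i) := by
  simp only [scal, iInf_iUnion]

lemma scal_SMap {e' : E →L[ℝ] ℝ} (he' : e' ≠ 0) (f' : F →L[ℝ] ℝ) (y : F) :
    scal e' (SMap f' e' y) = f' y := by
  refine le_antisymm ?_ (le_iInf₂ fun e he => EReal.coe_le_coe he)
  obtain ⟨e, he⟩ :=
    LinearMap.surjective_iff_ne_zero.2 (ContinuousLinearMap.coe_injective.ne he') (f' y)
  exact he ▸ scal_le_of_mem (show e ∈ SMap f' e' y from he.ge)

end Scalarization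

theorem lagrangian_of_scalarized_problem_general
    (f : X → Set Z) (g : X → Set Y)
    (x : X) (y' : Y →L[ℝ] ℝ) (z' : Z →L[ℝ] ℝ)
    (hz0 : z' ≠ 0) :
    eadd (scal z' (f x)) (scal y' (g x)) = scal z' (lag f g x y' z') := by
  rw [lag, scal_closure, scal_add, scal_closure, scal_biUnion]
  simp only [scal_SMap hz0]
  rfl

/-- **Lagrange functions of the scalarized problems.** For all `x ∈ X`, `y* ∈ Y*` and
`z* ∈ C⁺∖{0}`: `λ_{z*}(x,y*) = φ_{l,z*}(x,y*)`, i.e.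
`φ_{f,z*}(x) + φ_{g,y*}(x) = inf {z*(z) | z ∈ l(x,y*,z*)}` (sum with the convention
`(+∞) + (−∞) = (−∞) + (+∞) = +∞`). -/
theorem lagrangian_of_scalarized_problem
    (C : Set Z) (hCconv : Convex ℝ C) (hCcone : ∀ t : ℝ, 0 < t → ∀ z ∈ C, t • z ∈ C)
    (hC0 : (0 : Z) ∈ C)
    (D : Set Y) (hDconv : Convex ℝ D) (hDcone : ∀ t : ℝ, 0 < t → ∀ y ∈ D, t • y ∈ D)
    (hD0 : (0 : Y) ∈ D)
    (f : X → Set Z) (g : X → Set Y)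
    (hfF : ∀ x, f x = closure (f x + C))
    (hgF : ∀ x, g x = closure (g x + D))
    (x : X) (y' : Y →L[ℝ] ℝ) (z' : Z →L[ℝ] ℝ)
    (hz' : z' ∈ posDual C) (hz0 : z' ≠ 0) :
    eadd (scal z' (f x)) (scal y' (g x)) = scal z' (lag f g x y' z') :=
  lagrangian_of_scalarized_problem_general f g x y' z' hz0
end
end

section
/- (Dual attainment.) Let f and g be convex (i.e. their graphs are convex), assume the Slater condition (there exists x̄ ∈ X with f(x̄) ≠ ∅ and g(x̄) ∩ (−int D) ≠ ∅), and assume p ≠ Z. Then: (i) for every z* ∈ C+∖{0} with p ⊕ S(z*) ≠ Z there exists y* ∈ Y* such that p ⊕ S(z*) = h(y*,z*); (ii) for every z* ∈ C+∖{0} with p_{z*} > −∞ there exists y* ∈ Y* with p_{z*} = φ_{h,z*}(y*); (iii) the set Δ = {(y*,z*) ∈ Y*×(C+∖{0}) : Z ≠ p ⊕ S(z*) = h(y*,z*)} is nonempty, satisfies ⋂_{(y*,z*) ∈ Δ} h(y*,z*) = d, and {h(y*,z*) : (y*,z*) ∈ Δ} is exactly the set of maximal elements of {h(y*,z*) : (y*,z*)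 ∈ Y*×(C+∖{0})} with respect to the order A ≤ B ⟺ A ⊇ B; in particular Δ is a full solution of the dual problem of maximizing h over Y*×(C+∖{0}). -/
/-!
For `z* ≠ 0` the set `p ⊕ S(z*)` is the closed half-space `{z | p_{z*} ≤ z*(z)}`, and every
`h(y*, z*)` contains it (weak duality). When this half-space is proper, `p_{z*}` is finite, and
separating the convex set `{(y, r) | y ∈ g(x), z ∈ f(x), z*(z) ≤ r}`, enlarged by the open cone
`int D × (0, ∞)`, from `{0} × (-∞, p_{z*})` yields a multiplier `y*` with
`p_{z*} ≤ z*(z) + y*(y)` on the graph; the Slater point makes the `ℝ`-component of the separating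
functional negative. Then `h(y*, z*)` lies in the half-space, which gives (i) and (ii).

Separating a point from the closed convex set `p = p + C` gives some `z* ∈ C⁺ ∖ {0}` with
`p ⊕ S(z*) ≠ Z`, so `Δ ≠ ∅`. Every `h(y*, z*)` then contains `h(q)` for some `q ∈ Δ`, and two
proper half-spaces `p ⊕ S(z₁) ⊆ p ⊕ S(z₂)` coincide, because `S(z₁) ⊆ S(z₂)` forces `z₂` to be a
positive multiple of `z₁`. This gives the intersection formula and the maximal elements.
-/

open Set Pointwise Topology Filter

noncomputable section

variable {X Y Z : Type*}
  [AddCommGroup X] [Module ℝ X] [TopologicalSpace X] [IsTopologicalAddGroup X]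
  [ContinuousSMul ℝ X] [LocallyConvexSpace ℝ X]
  [AddCommGroup Y] [Module ℝ Y] [TopologicalSpace Y] [IsTopologicalAddGroup Y]
  [ContinuousSMul ℝ Y] [LocallyConvexSpace ℝ Y]
  [AddCommGroup Z] [Module ℝ Z] [TopologicalSpace Z] [IsTopologicalAddGroup Z]
  [ContinuousSMul ℝ Z] [LocallyConvexSpace ℝ Z]

/-- The set `Δ = {(y*,z*) ∈ Y*×(C⁺∖{0}) | Z ≠ p ⊕ S(z*) = h(y*,z*)}`, where `p = v(0)`. -/
def Delta (C : Set Z) (f : X → Set Z) (g : X → Set Y) :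
    Set ((Y →L[ℝ] ℝ) × (Z →L[ℝ] ℝ)) :=
  {q | q.2 ∈ posDual C \ {0} ∧ closure (valFn f g 0 + SPos q.2) ≠ univ ∧
       closure (valFn f g 0 + SPos q.2) = dualObj f g q.1 q.2}

/-- The family `{h(y*,z*) | (y*,z*) ∈ Y*×(C⁺∖{0})}` of dual objective values. -/
def HFam (C : Set Z) (f : X → Set Z) (g : X → Set Y) : Set (Set Z) :=
  {A | ∃ y' : Y →L[ℝ] ℝ, ∃ z' ∈ posDual C \ {0}, A = dualObj f g y' z'}

section PointwiseClosure

variable {E : Type*} [TopologicalSpace E]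

section Add

variable [Add E] [ContinuousAdd E]

theorem closure_add_closure_subset (A B : Set E) : closure A + closure B ⊆ closure (A + B) :=
  image2_subset_iff.2 fun _ ha _ hb =>
    map_mem_closure₂ continuous_add ha hb fun _ ha' _ hb' => Set.add_mem_add ha' hb'

theorem closure_closure_add (A B : Set E) : closure (closure A + B) = closure (A + B) :=
  (closure_minimal ((add_subset_add_left subset_closure).trans (closure_add_closure_subset A B))
    isClosed_closure).antisymm (closure_mono (add_subset_add_right subset_closure))

end Add

variable [AddCommMonoid E] [ContinuousAdd E] [Module ℝ E] [ContinuousSMul ℝ E]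

theorem mem_closure_of_forall_pos_add_smul_mem {K : Set E} {x v : E}
    (h : ∀ t : ℝ, 0 < t → x + t • v ∈ K) : x ∈ closure K := by
  have hlim : Tendsto (fun t : ℝ => x + t • v) (𝓝[>] 0) (𝓝 x) :=
    ((by fun_prop : Continuous fun t : ℝ => x + t • v).tendsto' 0 x (by simp)).mono_left
      nhdsWithin_le_nhds
  exact mem_closure_of_tendsto hlim (eventually_nhdsWithin_of_forall h)

end PointwiseClosure

theorem exists_zero_mem_of_slater {V E W : Type*} [AddGroup E] [TopologicalSpace E] {D : Set E}
    {f : V → Set W} {g : V → Set E} (hgD : ∀ x, g x + D ⊆ g x)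
    (slater : ∃ x, (f x).Nonempty ∧ (g x ∩ -interior D).Nonempty) :
    ∃ x, (0 : E) ∈ g x ∧ (f x).Nonempty := by
  obtain ⟨x, hf, y, hy, hyD⟩ := slater
  exact ⟨x, by simpa using hgD x (Set.add_mem_add hy (interior_subset hyD)), hf⟩

section Lagrange

variable {E : Type*} [AddCommGroup E] [Module ℝ E] [TopologicalSpace E]

theorem smul_mem_interior_of_forall_smul_mem [ContinuousConstSMul ℝ E] {D : Set E}
    (hDcone : ∀ t : ℝ, 0 < t → ∀ y ∈ D, t • y ∈ D) {t : ℝ} (ht : 0 < t) {y : E}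
    (hy : y ∈ interior D) : t • y ∈ interior D := by
  have hsub : t • D ⊆ D := smul_set_subset_iff.2 fun y hy => hDcone t ht y hy
  exact interior_mono hsub ((interior_smul₀ ht.ne' D).symm ▸ smul_mem_smul_set hy)

theorem ContinuousLinearMap.apply_prod_mk (F : E × ℝ →L[ℝ] ℝ) (y : E) (r : ℝ) :
    F (y, r) = F (y, 0) + r * F (0, 1) := by
  have : ((y, r) : E × ℝ) = (y, 0) + r • ((0 : E), (1 : ℝ)) := by simp
  rw [this, map_add, map_smul, smul_eq_mul]

variable [IsTopologicalAddGroup E] [ContinuousSMul ℝ E]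

theorem exists_separating_functional_of_slater {D : Set E} (hDconv : Convex ℝ D)
    (hDcone : ∀ t : ℝ, 0 < t → ∀ y ∈ D, t • y ∈ D) {A : Set (E × ℝ)} (hAconv : Convex ℝ A)
    (hAmono : A + D ×ˢ Ici 0 ⊆ A) {y₀ : E} {r₀ : ℝ} (h₀ : (y₀, r₀) ∈ A)
    (hy₀ : -y₀ ∈ interior D) {m : ℝ} (hm : ∀ r, ((0 : E), r) ∈ A → m ≤ r) :
    ∃ F : E × ℝ →L[ℝ] ℝ, F (0, 1) < 0 ∧ ∀ q ∈ A, ∀ r < m, F q ≤ F (0, r) := by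
  set W := A + interior D ×ˢ Ioi (0 : ℝ)
  have hWA : W ⊆ A :=
    (add_subset_add_left (Set.prod_mono interior_subset Ioi_subset_Ici_self)).trans hAmono
  have hdisj : Disjoint W ({(0 : E)} ×ˢ Iio m) := by
    rw [disjoint_left]
    rintro ⟨y, r⟩ hW ⟨rfl : y = 0, hr⟩
    exact (hm r (hWA hW)).not_gt hr
  obtain ⟨F, u, hFW, hFB⟩ := geometric_hahn_banach_open
    (hAconv.add (hDconv.interior.prod (convex_Ioi 0))) (isOpen_interior.prod isOpen_Ioi).add_left
    ((convex_singleton 0).prod (convex_Iio m)) hdisj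
  have hAu : ∀ q ∈ A, F q ≤ u := by
    intro q hq
    have hqW : q ∈ closure W := mem_closure_of_forall_pos_add_smul_mem (v := (-y₀, 1))
      fun t ht => Set.add_mem_add hq
        ⟨by simpa using smul_mem_interior_of_forall_smul_mem hDcone ht hy₀, by simpa using ht⟩
    exact closure_minimal (fun w hw => (hFW w hw).le)
      (isClosed_le F.continuous continuous_const) hqW
  have hBu : ∀ r < m, u ≤ F (0, r) := fun r hr => hFB (0, r) ⟨rfl, hr⟩
  refine ⟨F, ?_, fun q hq r hr => (hAu q hq).trans (hBu r hr)⟩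
  have hW : ((0 : E), r₀ + 1) ∈ W := by
    simpa using Set.add_mem_add h₀ (Set.mk_mem_prod hy₀ (mem_Ioi.2 one_pos))
  have h := (hFW _ hW).trans_le (hBu (min m r₀ - 1) (by linarith [min_le_left m r₀]))
  rw [F.apply_prod_mk 0 (r₀ + 1), F.apply_prod_mk 0 (min m r₀ - 1), Prod.mk_zero_zero,
    map_zero] at h
  nlinarith [min_le_right m r₀]

theorem exists_lagrange_multiplier {D : Set E} (hDconv : Convex ℝ D)
    (hDcone : ∀ t : ℝ, 0 < t → ∀ y ∈ D, t • y ∈ D) {A : Set (E × ℝ)} (hAconv : Convex ℝ A)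
    (hAmono : A + D ×ˢ Ici 0 ⊆ A) {y₀ : E} {r₀ : ℝ} (h₀ : (y₀, r₀) ∈ A)
    (hy₀ : -y₀ ∈ interior D) {m : ℝ} (hm : ∀ r, ((0 : E), r) ∈ A → m ≤ r) :
    ∃ y' : E →L[ℝ] ℝ, ∀ q ∈ A, m ≤ q.2 + y' q.1 := by
  obtain ⟨F, hs, hF⟩ :=
    exists_separating_functional_of_slater hDconv hDcone hAconv hAmono h₀ hy₀ hm
  refine ⟨(F (0, 1))⁻¹ • F.comp (ContinuousLinearMap.inl ℝ E ℝ), fun ⟨y, r⟩ hq =>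
    le_of_forall_lt_imp_le_of_dense fun r' hr' => ?_⟩
  have h := hF _ hq r' hr'
  rw [F.apply_prod_mk y r, F.apply_prod_mk 0 r', Prod.mk_zero_zero, map_zero, zero_add] at h
  show r' ≤ r + (F (0, 1))⁻¹ * F (y, 0)
  rw [← div_eq_inv_mul, ← sub_le_iff_le_add', le_div_iff_of_neg hs]
  linarith

variable {V W : Type*} [AddCommGroup V] [Module ℝ V] [AddCommGroup W] [Module ℝ W]

theorem exists_lagrange_multiplier_of_slater {D : Set E} (hDconv : Convex ℝ D)
    (hDcone : ∀ t : ℝ, 0 < t → ∀ y ∈ D, t • y ∈ D) {f : V → Set W} {g : V → Set E}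
    (hfconv : Convex ℝ {q : V × W | q.2 ∈ f q.1}) (hgconv : Convex ℝ {q : V × E | q.2 ∈ g q.1})
    (hgD : ∀ x, g x + D ⊆ g x) (slater : ∃ x, (f x).Nonempty ∧ (g x ∩ -interior D).Nonempty)
    (φ : W →ₗ[ℝ] ℝ) {m : ℝ} (hm : ∀ x, (0 : E) ∈ g x → ∀ z ∈ f x, m ≤ φ z) :
    ∃ y' : E →L[ℝ] ℝ, ∀ x, ∀ y ∈ g x, ∀ z ∈ f x, m ≤ φ z + y' y := by
  set A : Set (E × ℝ) := {q | ∃ x, q.1 ∈ g x ∧ ∃ z ∈ f x, φ z ≤ q.2}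
  have hAconv : Convex ℝ A := by
    rintro ⟨y₁, r₁⟩ ⟨x₁, hy₁, z₁, hz₁, hr₁⟩ ⟨y₂, r₂⟩ ⟨x₂, hy₂, z₂, hz₂, hr₂⟩ a b ha hb hab
    refine ⟨a • x₁ + b • x₂, ?_, a • z₁ + b • z₂, ?_, ?_⟩
    · simpa using hgconv (show (x₁, y₁) ∈ _ from hy₁) (show (x₂, y₂) ∈ _ from hy₂) ha hb hab
    · simpa using hfconv (show (x₁, z₁) ∈ _ from hz₁) (show (x₂, z₂) ∈ _ from hz₂) ha hb hab
    · simp only [map_add, map_smul, smul_eq_mul, Prod.smul_mk, Prod.mk_add_mk]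
      exact add_le_add (mul_le_mul_of_nonneg_left hr₁ ha) (mul_le_mul_of_nonneg_left hr₂ hb)
  have hAmono : A + D ×ˢ Ici 0 ⊆ A := by
    rintro _ ⟨⟨y, r⟩, ⟨x, hy, z, hz, hzr⟩, ⟨d, δ⟩, ⟨hd, hδ⟩, rfl⟩
    refine ⟨x, hgD x (Set.add_mem_add hy hd), z, hz, ?_⟩
    simp only [Prod.mk_add_mk]
    linarith [mem_Ici.1 hδ]
  obtain ⟨x₀, ⟨z₀, hz₀⟩, y₀, hy₀, hy₀D⟩ := slater
  obtain ⟨y', hy'⟩ := exists_lagrange_multiplier hDconv hDcone hAconv hAmono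
    (show (y₀, φ z₀) ∈ A from ⟨x₀, hy₀, z₀, hz₀, le_rfl⟩) hy₀D
    fun r ⟨x, hx, z, hz, hzr⟩ => (hm x hx z hz).trans hzr
  exact ⟨y', fun x y hy z hz => hy' (y, φ z) ⟨x, hy, z, hz, le_rfl⟩⟩

end Lagrange

section Scalarization

variable {X Y Z : Type*} [AddCommGroup Z] [Module ℝ Z] [TopologicalSpace Z]

theorem ContinuousLinearMap.exists_apply_eq_of_ne_zero {φ : Z →L[ℝ] ℝ} (hφ : φ ≠ 0) (r : ℝ) :
    ∃ z, φ z = r :=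
  LinearMap.surjective (f := (φ : Z →ₗ[ℝ] ℝ)) (by exact_mod_cast hφ) r

theorem scal_setOf_le {z' : Z →L[ℝ] ℝ} (hz' : z' ≠ 0) (c : EReal) :
    scal z' {z | c ≤ z' z} = c := by
  refine le_antisymm (EReal.le_of_forall_lt_iff_le.1 fun r hr => ?_) (le_iInf₂ fun _ hz => hz)
  obtain ⟨e, he⟩ := z'.exists_apply_eq_of_ne_zero hz' r
  calc scal z' {z | c ≤ z' z} ≤ z' e := iInf₂_le e (show c ≤ z' e by rw [he]; exact hr.le)
    _ = r := by rw [he]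

theorem SPos_eq_of_subset {z₁ z₂ : Z →L[ℝ] ℝ} (hz₁ : z₁ ≠ 0) (hz₂ : z₂ ≠ 0)
    (h : SPos z₁ ⊆ SPos z₂) : SPos z₁ = SPos z₂ := by
  obtain ⟨e, he⟩ := z₁.exists_apply_eq_of_ne_zero hz₁ 1
  -- `ker z₁ ⊆ SPos z₁ ∩ -SPos z₁ ⊆ ker z₂`, hence `z₂ = z₂ e • z₁` with `z₂ e ≥ 0`.
  have hker : ∀ v, z₁ v = 0 → z₂ v = 0 := fun v hv =>
    le_antisymm (by simpa using show 0 ≤ z₂ (-v) from h (show 0 ≤ z₁ (-v) by simp [hv]))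
      (h (show 0 ≤ z₁ v from hv.ge))
  have hz₂_eq : ∀ v, z₂ v = z₁ v * z₂ e := fun v => by
    simpa [he, sub_eq_zero] using hker (v - z₁ v • e) (by simp [he])
  have hpos : 0 < z₂ e := by
    refine (h (show 0 ≤ z₁ e by rw [he]; exact zero_le_one)).lt_of_ne fun h0 => hz₂ ?_
    ext v
    simp [hz₂_eq v, ← h0]
  refine h.antisymm fun v (hv : 0 ≤ z₂ v) => ?_
  rw [hz₂_eq] at hv
  exact nonneg_of_mul_nonneg_left hv hpos

theorem nonneg_of_forall_add_smul_mem {K : Set Z} {φ : Z →L[ℝ] ℝ} (hK : K + SPos φ ⊆ K)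
    (hne : K ≠ univ) {a s : Z} (hray : ∀ t : ℝ, 0 < t → a + t • s ∈ K) : 0 ≤ φ s := by
  by_contra! hs
  refine hne (eq_univ_of_forall fun w => ?_)
  obtain ⟨t, ht, hts⟩ : ∃ t : ℝ, 0 < t ∧ t * φ s = -(|φ w - φ a| + 1) :=
    ⟨(|φ w - φ a| + 1) / -φ s, div_pos (by positivity) (neg_pos.2 hs), by field_simp [hs.ne]⟩
  refine hK ⟨a + t • s, hray t ht, w - (a + t • s), ?_, add_sub_cancel _ _⟩
  show 0 ≤ φ (w - (a + t • s))
  rw [map_sub, map_add, map_smul, smul_eq_mul, hts]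
  linarith [neg_abs_le (φ w - φ a)]

variable [ContinuousAdd Z] [ContinuousSMul ℝ Z]

-- Stated in `EReal`, it also covers `scal z' A = ⊥` (closure `univ`) and `A = ∅` (closure `∅`).
theorem closure_add_SPos_eq {A : Set Z} {z' : Z →L[ℝ] ℝ} (hz' : z' ≠ 0) :
    closure (A + SPos z') = {z | scal z' A ≤ z' z} := by
  have hclosed : IsClosed {z : Z | scal z' A ≤ z' z} :=
    isClosed_le continuous_const (continuous_coe_real_ereal.comp z'.continuous)
  refine (closure_minimal ?_ hclosed).antisymm fun z hz => ?_
  · rintro _ ⟨a, ha, s, hs, rfl⟩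
    calc scal z' A ≤ z' a := iInf₂_le a ha
      _ ≤ z' (a + s) := by rw [map_add]; exact EReal.coe_le_coe_iff.2 (le_add_of_nonneg_right hs)
  obtain ⟨e, he⟩ := z'.exists_apply_eq_of_ne_zero hz' 1
  refine mem_closure_of_forall_pos_add_smul_mem (v := e) fun t ht => ?_
  have hlt : scal z' A < (z' z + t : ℝ) :=
    hz.trans_lt (EReal.coe_lt_coe_iff.2 (lt_add_of_pos_right _ ht))
  obtain ⟨a, ha, hat⟩ : ∃ a ∈ A, (z' a : EReal) < (z' z + t : ℝ) := by
    simpa only [scal, iInf_lt_iff, exists_prop] using hlt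
  refine ⟨a, ha, z + t • e - a, ?_, add_sub_cancel _ _⟩
  show 0 ≤ z' (z + t • e - a)
  rw [map_sub, map_add, map_smul, he, smul_eq_mul, mul_one]
  linarith [EReal.coe_lt_coe_iff.1 hat]

theorem closure_valFn_add_SPos [Zero Y] {f : X → Set Z} {g : X → Set Y} {z' : Z →L[ℝ] ℝ}
    (hz' : z' ≠ 0) :
    closure (valFn f g 0 + SPos z') =
      {z | (⨅ x ∈ {x : X | (0 : Y) ∈ g x}, scal z' (f x)) ≤ z' z} := by
  rw [valFn, closure_closure_add, closure_add_SPos_eq hz']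
  simp only [scal, iInf_iUnion]

theorem closure_add_SPos_eq_of_subset {P : Set Z} (hP : P.Nonempty) {z₁ z₂ : Z →L[ℝ] ℝ}
    (hz₁ : z₁ ≠ 0) (hz₂ : z₂ ≠ 0) (h : closure (P + SPos z₁) ⊆ closure (P + SPos z₂))
    (hne : closure (P + SPos z₂) ≠ univ) : closure (P + SPos z₁) = closure (P + SPos z₂) := by
  obtain ⟨a, ha⟩ := hP
  have hstable : closure (P + SPos z₂) + SPos z₂ ⊆ closure (P + SPos z₂) := by
    rw [closure_add_SPos_eq hz₂]
    rintro _ ⟨b, hb, s, hs, rfl⟩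
    refine hb.trans (EReal.coe_le_coe_iff.2 ?_)
    rw [map_add]
    exact le_add_of_nonneg_right hs
  have hsub : SPos z₁ ⊆ SPos z₂ := fun s hs =>
    nonneg_of_forall_add_smul_mem hstable hne fun t ht => h <| subset_closure <|
      Set.add_mem_add ha (show 0 ≤ z₁ (t • s) by rw [map_smul]; exact mul_nonneg ht.le hs)
  rw [SPos_eq_of_subset hz₁ hz₂ hsub]

end Scalarization

section ValueFunction

variable {X Y Z : Type*} {f : X → Set Z} {g : X → Set Y}

theorem convex_valFn [AddCommGroup X] [Module ℝ X] [AddCommGroup Y] [Module ℝ Y]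
    [AddCommGroup Z] [Module ℝ Z] [TopologicalSpace Z] [IsTopologicalAddGroup Z]
    [ContinuousSMul ℝ Z] (hfconv : Convex ℝ {q : X × Z | q.2 ∈ f q.1})
    (hgconv : Convex ℝ {q : X × Y | q.2 ∈ g q.1}) (y : Y) : Convex ℝ (valFn f g y) := by
  refine Convex.closure ?_
  rintro _ hw₁ _ hw₂ a b ha hb hab
  obtain ⟨x₁, hx₁, hw₁⟩ := mem_iUnion₂.1 hw₁
  obtain ⟨x₂, hx₂, hw₂⟩ := mem_iUnion₂.1 hw₂
  refine mem_iUnion₂.2 ⟨a • x₁ + b • x₂, ?_, ?_⟩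
  · simpa [Convex.combo_self hab] using
      hgconv (show (x₁, y) ∈ _ from hx₁) (show (x₂, y) ∈ _ from hx₂) ha hb hab
  · simpa using hfconv (show (x₁, _) ∈ _ from hw₁) (show (x₂, _) ∈ _ from hw₂) ha hb hab

theorem valFn_add_subset [TopologicalSpace Z] [Add Z] [ContinuousAdd Z] {C : Set Z}
    (hfC : ∀ x, f x + C ⊆ f x) (y : Y) :
    valFn f g y + C ⊆ valFn f g y :=
  calc valFn f g y + C ⊆ closure ((⋃ x ∈ {x | y ∈ g x}, f x) + C) :=
        (add_subset_add_left subset_closure).trans (closure_add_closure_subset _ _)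
    _ ⊆ valFn f g y := closure_mono <| by
        rw [iUnion₂_add]
        exact iUnion₂_mono fun x _ => hfC x

end ValueFunction

section Duality

variable {X Y Z : Type*} [AddCommGroup Y] [Module ℝ Y] [TopologicalSpace Y]
  [AddCommGroup Z] [Module ℝ Z] [TopologicalSpace Z] {f : X → Set Z} {g : X → Set Y}

theorem closure_valFn_add_SPos_subset_dualObj [ContinuousAdd Z] (y' : Y →L[ℝ] ℝ)
    (z' : Z →L[ℝ] ℝ) : closure (valFn f g 0 + SPos z') ⊆ dualObj f g y' z' := by
  rw [valFn, closure_closure_add]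
  refine closure_mono ?_
  rintro _ ⟨a, ha, s, hs, rfl⟩
  obtain ⟨x, hx, ha⟩ := mem_iUnion₂.1 ha
  refine mem_iUnion.2 ⟨x, subset_closure (Set.add_mem_add ha (subset_closure ?_))⟩
  exact mem_iUnion₂.2 ⟨0, hx, show y' 0 ≤ z' s by rw [map_zero]; exact hs⟩

theorem dualObj_subset_setOf_le {y' : Y →L[ℝ] ℝ} {z' : Z →L[ℝ] ℝ} {m : ℝ}
    (hm : ∀ x, ∀ y ∈ g x, ∀ z ∈ f x, m ≤ z' z + y' y) :
    dualObj f g y' z' ⊆ {z | m ≤ z' z} := by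
  have hclosed : ∀ c : ℝ, IsClosed {z : Z | c ≤ z' z} := fun c =>
    isClosed_le continuous_const z'.continuous
  refine closure_minimal (iUnion_subset fun x => closure_minimal ?_ (hclosed m)) (hclosed m)
  rintro _ ⟨a, ha, s, hs, rfl⟩
  have hSMap : ⋃ y ∈ g x, SMap y' z' y ⊆ {v | m - z' a ≤ z' v} := by
    refine iUnion₂_subset fun y hy v hv => ?_
    have : y' y ≤ z' v := hv
    show m - z' a ≤ z' v
    linarith [hm x y hy a ha]
  have : m - z' a ≤ z' s := closure_minimal hSMap (hclosed _) hs
  show m ≤ z' (a + s)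
  rw [map_add]
  linarith

theorem exists_closure_valFn_add_SPos_eq_dualObj [AddCommGroup X] [Module ℝ X]
    [IsTopologicalAddGroup Y] [ContinuousSMul ℝ Y] [ContinuousAdd Z] [ContinuousSMul ℝ Z]
    {D : Set Y} (hDconv : Convex ℝ D) (hDcone : ∀ t : ℝ, 0 < t → ∀ y ∈ D, t • y ∈ D)
    (hfconv : Convex ℝ {q : X × Z | q.2 ∈ f q.1}) (hgconv : Convex ℝ {q : X × Y | q.2 ∈ g q.1})
    (hgD : ∀ x, g x + D ⊆ g x) (slater : ∃ x, (f x).Nonempty ∧ (g x ∩ -interior D).Nonempty)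
    {z' : Z →L[ℝ] ℝ} (hz' : z' ≠ 0) (hM : closure (valFn f g 0 + SPos z') ≠ univ) :
    ∃ y' : Y →L[ℝ] ℝ, closure (valFn f g 0 + SPos z') = dualObj f g y' z' := by
  have hM_eq := closure_valFn_add_SPos (f := f) (g := g) hz'
  set c := ⨅ x ∈ {x : X | (0 : Y) ∈ g x}, scal z' (f x)
  have hc_bot : c ≠ ⊥ := fun hc => hM (by simp [hM_eq, hc])
  obtain ⟨x₀, hx₀, z₀, hz₀⟩ := exists_zero_mem_of_slater hgD slater
  have hc_le : ∀ x, (0 : Y) ∈ g x → ∀ z ∈ f x, c ≤ z' z := fun x hx z hz =>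
    (biInf_le (fun x => scal z' (f x)) hx).trans (iInf₂_le z hz)
  have hc_top : c ≠ ⊤ := ne_top_of_le_ne_top (EReal.coe_ne_top _) (hc_le x₀ hx₀ z₀ hz₀)
  obtain ⟨m, hm⟩ : ∃ m : ℝ, (m : EReal) = c := ⟨c.toReal, EReal.coe_toReal hc_top hc_bot⟩
  have hfeas : ∀ x, (0 : Y) ∈ g x → ∀ z ∈ f x, m ≤ z' z := fun x hx z hz =>
    EReal.coe_le_coe_iff.1 (hm ▸ hc_le x hx z hz)
  obtain ⟨y', hy'⟩ := exists_lagrange_multiplier_of_slater hDconv hDcone hfconv hgconv hgD slater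
    (z' : Z →ₗ[ℝ] ℝ) hfeas
  refine ⟨y', (closure_valFn_add_SPos_subset_dualObj y' z').antisymm ?_⟩
  rw [hM_eq, ← hm]
  exact fun z hz => EReal.coe_le_coe_iff.2 (dualObj_subset_setOf_le hy' hz)

end Duality

section Attainment

variable {X Y Z : Type*} [AddCommGroup Y] [Module ℝ Y] [TopologicalSpace Y]
  [AddCommGroup Z] [Module ℝ Z] [TopologicalSpace Z] {C : Set Z} {f : X → Set Z} {g : X → Set Y}

theorem exists_mem_posDual_closure_add_SPos_ne_univ [IsTopologicalAddGroup Z] [ContinuousSMul ℝ Z]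
    [LocallyConvexSpace ℝ Z] (hCcone : ∀ t : ℝ, 0 < t → ∀ z ∈ C, t • z ∈ C) {P : Set Z}
    (hPconv : Convex ℝ P) (hPclosed : IsClosed P) (hPne : P.Nonempty) (hPC : P + C ⊆ P)
    (hP : P ≠ univ) : ∃ z' ∈ posDual C \ {0}, closure (P + SPos z') ≠ univ := by
  obtain ⟨w, hw⟩ := (ne_univ_iff_exists_notMem P).1 hP
  obtain ⟨F, u, hFP, hFw⟩ := geometric_hahn_banach_closed_point hPconv hPclosed hw
  obtain ⟨a, ha⟩ := hPne
  have hC : -F ∈ posDual C := fun c hc => by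
    by_contra! h
    have hFc : 0 < F c := by simpa using h
    have := hFP _ (hPC (Set.add_mem_add ha
      (hCcone ((u - F a) / F c) (div_pos (sub_pos.2 (hFP a ha)) hFc) c hc)))
    rw [map_add, map_smul, smul_eq_mul, div_mul_cancel₀ _ hFc.ne'] at this
    linarith
  have hsub : closure (P + SPos (-F)) ⊆ {z | F z ≤ u} := by
    refine closure_minimal ?_ (isClosed_le F.continuous continuous_const)
    rintro _ ⟨b, hb, s, hs, rfl⟩
    have : 0 ≤ -F s := hs
    show F (b + s) ≤ u
    linarith [map_add F b s, hFP b hb]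
  refine ⟨-F, ⟨hC, fun h0 => ?_⟩, fun h => (hsub (h ▸ mem_univ w)).not_gt hFw⟩
  have hF : F = 0 := neg_eq_zero.1 h0
  have hFa := hFP a ha
  rw [hF, zero_apply] at hFa hFw
  linarith

def DualAttainment (C : Set Z) (f : X → Set Z) (g : X → Set Y) : Prop :=
  ∀ z' ∈ posDual C \ {0}, closure (valFn f g 0 + SPos z') ≠ univ →
    ∃ y' : Y →L[ℝ] ℝ, closure (valFn f g 0 + SPos z') = dualObj f g y' z'

variable [ContinuousAdd Z]

theorem exists_scal_dualObj_eq [ContinuousSMul ℝ Z] (hsd : DualAttainment C f g)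
    {z' : Z →L[ℝ] ℝ} (hz' : z' ∈ posDual C \ {0})
    (hb : ⊥ < ⨅ x ∈ {x : X | (0 : Y) ∈ g x}, scal z' (f x)) :
    ∃ y' : Y →L[ℝ] ℝ,
      (⨅ x ∈ {x : X | (0 : Y) ∈ g x}, scal z' (f x)) = scal z' (dualObj f g y' z') := by
  have hM := closure_valFn_add_SPos (f := f) (g := g) hz'.2
  obtain ⟨r, -, hr⟩ := EReal.lt_iff_exists_real_btwn.1 hb
  obtain ⟨e, he⟩ := z'.exists_apply_eq_of_ne_zero hz'.2 r
  have he_notMem : e ∉ closure (valFn f g 0 + SPos z') := by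
    rw [hM]
    exact not_le.2 (he ▸ hr)
  obtain ⟨y', hy'⟩ := hsd z' hz' fun h => he_notMem (h ▸ mem_univ e)
  exact ⟨y', by rw [← hy', hM, scal_setOf_le hz'.2]⟩

theorem exists_mem_Delta_dualObj_subset (hsd : DualAttainment C f g)
    (hΔ : (Delta C f g).Nonempty) (y' : Y →L[ℝ] ℝ) {z' : Z →L[ℝ] ℝ}
    (hz' : z' ∈ posDual C \ {0}) : ∃ q ∈ Delta C f g, dualObj f g q.1 q.2 ⊆ dualObj f g y' z' := by
  by_cases hM : closure (valFn f g 0 + SPos z') = univ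
  · obtain ⟨q, hq⟩ := hΔ
    have huniv : dualObj f g y' z' = univ :=
      eq_univ_of_univ_subset (hM ▸ closure_valFn_add_SPos_subset_dualObj y' z')
    exact ⟨q, hq, huniv ▸ subset_univ _⟩
  · obtain ⟨y₀, hy₀⟩ := hsd z' hz' hM
    exact ⟨(y₀, z'), ⟨hz', hM, hy₀⟩, hy₀ ▸ closure_valFn_add_SPos_subset_dualObj y' z'⟩

theorem dualObj_eq_of_subset_of_mem_Delta [ContinuousSMul ℝ Z] (hp : (valFn f g 0).Nonempty)
    {q : (Y →L[ℝ] ℝ) × (Z →L[ℝ] ℝ)} (hq : q ∈ Delta C f g) {y' : Y →L[ℝ] ℝ}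
    {z' : Z →L[ℝ] ℝ} (hz' : z' ≠ 0) (hsub : dualObj f g y' z' ⊆ dualObj f g q.1 q.2) :
    dualObj f g y' z' = dualObj f g q.1 q.2 := by
  obtain ⟨hq₂, hqM, hqeq⟩ := hq
  refine hsub.antisymm ?_
  rw [← hqeq, ← closure_add_SPos_eq_of_subset hp hz' hq₂.2
    ((closure_valFn_add_SPos_subset_dualObj y' z').trans (hsub.trans hqeq.ge)) hqM]
  exact closure_valFn_add_SPos_subset_dualObj y' z'

theorem iInter_Delta_dualObj_eq (hsd : DualAttainment C f g) (hΔ : (Delta C f g).Nonempty) :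
    ⋂ q ∈ Delta C f g, dualObj f g q.1 q.2 =
      ⋂ (y' : Y →L[ℝ] ℝ), ⋂ z' ∈ posDual C \ {0}, dualObj f g y' z' := by
  refine (subset_iInter fun y' => subset_iInter₂ fun z' hz' => ?_).antisymm
    (subset_iInter₂ fun q hq => (iInter_subset _ q.1).trans (iInter₂_subset q.2 hq.1))
  obtain ⟨q, hq, hsub⟩ := exists_mem_Delta_dualObj_subset hsd hΔ y' hz'
  exact (iInter₂_subset q hq).trans hsub

theorem setOf_dualObj_Delta_eq_maximals [ContinuousSMul ℝ Z] (hsd : DualAttainment C f g)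
    (hΔ : (Delta C f g).Nonempty) (hp : (valFn f g 0).Nonempty) :
    {A : Set Z | ∃ q ∈ Delta C f g, A = dualObj f g q.1 q.2} =
      {A ∈ HFam C f g | ∀ B ∈ HFam C f g, B ⊆ A → B = A} := by
  ext A
  constructor
  · rintro ⟨q, hq, rfl⟩
    refine ⟨⟨q.1, q.2, hq.1, rfl⟩, ?_⟩
    rintro _ ⟨y', z', hz', rfl⟩ hsub
    exact dualObj_eq_of_subset_of_mem_Delta hp hq hz'.2 hsub
  · rintro ⟨⟨y', z', hz', rfl⟩, hmax⟩
    obtain ⟨q, hq, hsub⟩ := exists_mem_Delta_dualObj_subset hsd hΔ y' hz'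
    exact ⟨q, hq, (hmax _ ⟨q.1, q.2, hq.1, rfl⟩ hsub).symm⟩

end Attainment

theorem dual_attainment_general
    (C : Set Z) (hCcone : ∀ t : ℝ, 0 < t → ∀ z ∈ C, t • z ∈ C)
    (D : Set Y) (hDconv : Convex ℝ D) (hDcone : ∀ t : ℝ, 0 < t → ∀ y ∈ D, t • y ∈ D)
    (f : X → Set Z) (g : X → Set Y)
    (hfF : ∀ x, f x = closure (f x + C))
    (hgF : ∀ x, g x = closure (g x + D))
    (hfconv : Convex ℝ {q : X × Z | q.2 ∈ f q.1})
    (hgconv : Convex ℝ {q : X × Y | q.2 ∈ g q.1})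
    (slater : ∃ x : X, (f x).Nonempty ∧ (g x ∩ (-(interior D))).Nonempty)
    (hp : valFn f g 0 ≠ univ) :
    (∀ z' ∈ posDual C \ {0}, closure (valFn f g 0 + SPos z') ≠ univ →
        ∃ y' : Y →L[ℝ] ℝ, closure (valFn f g 0 + SPos z') = dualObj f g y' z') ∧
    (∀ z' ∈ posDual C \ {0},
        ⊥ < (⨅ x ∈ {x : X | (0 : Y) ∈ g x}, scal z' (f x)) →
        ∃ y' : Y →L[ℝ] ℝ,
          (⨅ x ∈ {x : X | (0 : Y) ∈ g x}, scal z' (f x)) = scal z' (dualObj f g y' z')) ∧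
    (Delta C f g).Nonempty ∧
    (⋂ q ∈ Delta C f g, dualObj f g q.1 q.2)
      = (⋂ (y' : Y →L[ℝ] ℝ), ⋂ z' ∈ posDual C \ {0}, dualObj f g y' z') ∧
    {A : Set Z | ∃ q ∈ Delta C f g, A = dualObj f g q.1 q.2}
      = {A ∈ HFam C f g | ∀ B ∈ HFam C f g, B ⊆ A → B = A} := by
  have hgD : ∀ x, g x + D ⊆ g x := fun x => subset_closure.trans (hgF x).ge
  have hfC : ∀ x, f x + C ⊆ f x := fun x => subset_closure.trans (hfF x).ge
  have hsd : DualAttainment C f g := fun z' hz' =>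
    exists_closure_valFn_add_SPos_eq_dualObj hDconv hDcone hfconv hgconv hgD slater hz'.2
  have hpne : (valFn f g 0).Nonempty := by
    obtain ⟨x, hx, z, hz⟩ := exists_zero_mem_of_slater hgD slater
    exact ⟨z, subset_closure (mem_biUnion (show x ∈ {x | (0 : Y) ∈ g x} from hx) hz)⟩
  have hΔ : (Delta C f g).Nonempty := by
    obtain ⟨z', hz', hM⟩ := exists_mem_posDual_closure_add_SPos_ne_univ hCcone
      (convex_valFn hfconv hgconv 0) isClosed_closure hpne (valFn_add_subset hfC 0) hp
    obtain ⟨y', hy'⟩ := hsd z' hz' hM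
    exact ⟨(y', z'), hz', hM, hy'⟩
  exact ⟨hsd, fun z' hz' => exists_scal_dualObj_eq hsd hz', hΔ, iInter_Delta_dualObj_eq hsd hΔ,
    setOf_dualObj_Delta_eq_maximals hsd hΔ hpne⟩

/-- **Dual attainment.** Under convexity and the Slater condition, with `p ≠ Z`:
(i) for each `z* ∈ C⁺∖{0}` with `p ⊕ S(z*) ≠ Z` there is `y*` with `p ⊕ S(z*) = h(y*,z*)`;
(ii) for each `z* ∈ C⁺∖{0}` with `p_{z*} > −∞` there is `y*` with `p_{z*} = φ_{h,z*}(y*)`;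
(iii) `Δ` is nonempty, `⋂_{(y*,z*) ∈ Δ} h(y*,z*) = d`, and `{h(y*,z*) | (y*,z*) ∈ Δ}` is
exactly the set of maximal elements of `{h(y*,z*) | (y*,z*) ∈ Y*×(C⁺∖{0})}` w.r.t. the
order `A ≤ B ⟺ A ⊇ B`; in particular `Δ` is a full solution of the dual problem. -/
theorem dual_attainment
    (C : Set Z) (hCconv : Convex ℝ C) (hCcone : ∀ t : ℝ, 0 < t → ∀ z ∈ C, t • z ∈ C)
    (hC0 : (0 : Z) ∈ C)
    (D : Set Y) (hDconv : Convex ℝ D) (hDcone : ∀ t : ℝ, 0 < t → ∀ y ∈ D, t • y ∈ D)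
    (hD0 : (0 : Y) ∈ D)
    (f : X → Set Z) (g : X → Set Y)
    (hfF : ∀ x, f x = closure (f x + C))
    (hgF : ∀ x, g x = closure (g x + D))
    (hfconv : Convex ℝ {q : X × Z | q.2 ∈ f q.1})
    (hgconv : Convex ℝ {q : X × Y | q.2 ∈ g q.1})
    (slater : ∃ x : X, (f x).Nonempty ∧ (g x ∩ (-(interior D))).Nonempty)
    (hp : valFn f g 0 ≠ univ) :
    (∀ z' ∈ posDual C \ {0}, closure (valFn f g 0 + SPos z') ≠ univ →
        ∃ y' : Y →L[ℝ] ℝ, closure (valFn f g 0 + SPos z') = dualObj f g y' z') ∧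
    (∀ z' ∈ posDual C \ {0},
        ⊥ < (⨅ x ∈ {x : X | (0 : Y) ∈ g x}, scal z' (f x)) →
        ∃ y' : Y →L[ℝ] ℝ,
          (⨅ x ∈ {x : X | (0 : Y) ∈ g x}, scal z' (f x)) = scal z' (dualObj f g y' z')) ∧
    (Delta C f g).Nonempty ∧
    (⋂ q ∈ Delta C f g, dualObj f g q.1 q.2)
      = (⋂ (y' : Y →L[ℝ] ℝ), ⋂ z' ∈ posDual C \ {0}, dualObj f g y' z') ∧
    {A : Set Z | ∃ q ∈ Delta C f g, A = dualObj f g q.1 q.2}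
      = {A ∈ HFam C f g | ∀ B ∈ HFam C f g, B ⊆ A → B = A} :=
  dual_attainment_general C hCcone D hDconv hDcone f g hfF hgF hfconv hgconv slater hp
end
end

section
/- (Set-valued Fenchel–Moreau theorem.) Let f : X → P(Z) be a convex set-valued map (its graph is convex) with f(x) ∈ G(Z,C) for all x ∈ X, such that there is x₀ ∈ X with f(x₀) ≠ ∅ and (cl f)(x) ≠ Z for all x ∈ X. Then cl f = f**, i.e. for every x ∈ X: {z : (x,z) ∈ cl(graph f)} = ⋂_{(x*,z*) ∈ X*×(C+∖{0})} [−f*(x*,z*) + S_{(x*,z*)}(x)]. -/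
/-!
For `z* ≠ 0` pick `e` with `z*(e) = 1`. A point `(x, z)` of the closed graph is approached by
graph points `(u, v)` with `z*(v) - x*(u)` almost at most `z*(z) - x*(x)`, so `z - x*(x) e` lies in
`-f*(x*, z*)` and `x*(x) e ∈ S_{(x*,z*)}(x)`; this gives `cl f ⊆ f**`.

Conversely, a point `(x, z)` outside the closed convex graph is strictly separated from it by a
functional `(u, v) ↦ x*(u) - z*(v)`, i.e. `c ≤ z*(v) - x*(u)` on the graph and `z*(z) - x*(x) < c`.
Such a bound makes `z*` bounded below on `f(x₀)`, and `f(x₀) + C ⊆ f(x₀)` then forces `z* ∈ C⁺`.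
It also bounds every element of `-f*(x*, z*) + S_{(x*,z*)}(x)` below by `c + x*(x)`, so `z ∉ f**(x)`
as soon as `z* ≠ 0`. If the separating hyperplane is vertical (`z* = 0`), add a large multiple of
it to a nonvertical bound, which exists by separating a point `(x₀, z₀) ∉ cl(graph f)` and using
`f(x₀) ≠ ∅`.
-/

open Set Pointwise Topology Filter

theorem exists_lt_add_of_mem_closure {E : Type*} [TopologicalSpace E] {S : Set E} {φ : E → ℝ}
    (hφ : Continuous φ) {p : E} (hp : p ∈ closure S) {ε : ℝ} (hε : 0 < ε) :
    ∃ q ∈ S, φ q < φ p + ε :=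
  (mem_closure_iff.1 hp _ (isOpen_lt hφ continuous_const) (lt_add_of_pos_right _ hε)).imp
    fun _ hq => ⟨hq.2, hq.1⟩

section

variable {X Z : Type*} [AddCommGroup X] [Module ℝ X] [TopologicalSpace X]
  [AddCommGroup Z] [Module ℝ Z] [TopologicalSpace Z]

def negFenchelConj (f : X → Set Z) (x' : X →L[ℝ] ℝ) (z' : Z →L[ℝ] ℝ) : Set Z :=
  closure (⋃ u, f u + SMap x' z' (-u))

theorem mem_iUnion_add_SMap_neg {f : X → Set Z} {x' : X →L[ℝ] ℝ} {z' : Z →L[ℝ] ℝ} {w : Z} :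
    w ∈ ⋃ u, f u + SMap x' z' (-u) ↔ ∃ u, ∃ v ∈ f u, z' v - x' u ≤ z' w := by
  simp only [mem_iUnion, Set.mem_add]
  constructor
  · rintro ⟨u, v, hv, s, hs, rfl⟩
    have hs : x' (-u) ≤ z' s := hs
    rw [map_neg] at hs
    exact ⟨u, v, hv, by rw [map_add]; linarith⟩
  · rintro ⟨u, v, hv, hle⟩
    refine ⟨u, v, hv, w - v, ?_, add_sub_cancel v w⟩
    show x' (-u) ≤ z' (w - v)
    rw [map_neg, map_sub]
    linarith

theorem negFenchelConj_subset {f : X → Set Z} {x' : X →L[ℝ] ℝ} {z' : Z →L[ℝ] ℝ} {c : ℝ}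
    (hc : ∀ u, ∀ v ∈ f u, c ≤ z' v - x' u) : negFenchelConj f x' z' ⊆ {w | c ≤ z' w} := by
  refine closure_minimal (fun w hw => ?_) (isClosed_le continuous_const z'.continuous)
  obtain ⟨u, v, hv, hle⟩ := mem_iUnion_add_SMap_neg.1 hw
  exact (hc u v hv).trans hle

theorem le_of_mem_negFenchelConj_add_SMap {f : X → Set Z} {x' : X →L[ℝ] ℝ} {z' : Z →L[ℝ] ℝ}
    {c : ℝ} {x : X} {z : Z} (hc : ∀ u, ∀ v ∈ f u, c ≤ z' v - x' u)
    (hz : z ∈ negFenchelConj f x' z' + SMap x' z' x) : c + x' x ≤ z' z := by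
  obtain ⟨w, hw, s, hs, rfl⟩ := hz
  have hcw : c ≤ z' w := negFenchelConj_subset hc hw
  have hxs : x' x ≤ z' s := hs
  rw [map_add]
  linarith

theorem mem_posDual_of_bddBelow {C A : Set Z} (hC : ∀ t : ℝ, 0 < t → ∀ z ∈ C, t • z ∈ C)
    (hA : A + C ⊆ A) {v₀ : Z} (hv₀ : v₀ ∈ A) {z' : Z →L[ℝ] ℝ} (hbdd : BddBelow (z' '' A)) :
    z' ∈ posDual C := by
  obtain ⟨b, hb⟩ := hbdd
  intro c hc
  by_contra! hneg
  set t := (|z' v₀ - b| + 1) / -z' c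
  have ht : 0 < t := div_pos (by positivity) (neg_pos.2 hneg)
  have htc : t * z' c = -(|z' v₀ - b| + 1) := by
    simp only [t, div_neg, neg_mul, div_mul_cancel₀ _ hneg.ne]
  have hle := hb (mem_image_of_mem z' (hA (add_mem_add hv₀ (hC t ht c hc))))
  rw [map_add, map_smul, smul_eq_mul, htc] at hle
  linarith [le_abs_self (z' v₀ - b)]

theorem mem_negFenchelConj_add_SMap [ContinuousAdd Z] [ContinuousSMul ℝ Z] {f : X → Set Z}
    {x' : X →L[ℝ] ℝ} {z' : Z →L[ℝ] ℝ} (hz' : z' ≠ 0) {x : X} {z : Z}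
    (hz : (x, z) ∈ closure {q : X × Z | q.2 ∈ f q.1}) :
    z ∈ negFenchelConj f x' z' + SMap x' z' x := by
  obtain ⟨e, he⟩ := LinearMap.surjective_of_ne_zero (f := (z' : Z →ₗ[ℝ] ℝ))
    (fun h => hz' (ContinuousLinearMap.coe_injective h)) 1
  replace he : z' e = 1 := he
  set w := z - x' x • e
  have hw : w ∈ negFenchelConj f x' z' := by
    have htend : Tendsto (fun ε : ℝ => w + ε • e) (𝓝[>] 0) (𝓝 w) :=
      tendsto_nhdsWithin_of_tendsto_nhds (Continuous.tendsto' (by fun_prop) 0 w (by simp))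
    refine mem_closure_of_tendsto htend (eventually_mem_nhdsWithin.mono fun ε hε => ?_)
    obtain ⟨⟨u, v⟩, hv, hlt⟩ := exists_lt_add_of_mem_closure
      (φ := fun q : X × Z => z' q.2 - x' q.1) (by fun_prop) hz hε
    refine mem_iUnion_add_SMap_neg.2 ⟨u, v, hv, ?_⟩
    simp only [w, map_add, map_sub, map_smul, he, smul_eq_mul, mul_one] at hlt ⊢
    linarith
  refine ⟨w, hw, x' x • e, ?_, sub_add_cancel z _⟩
  show x' x ≤ z' (x' x • e)
  simp [he]

end

variable {X Y Z : Type*}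
  [AddCommGroup X] [Module ℝ X] [TopologicalSpace X] [IsTopologicalAddGroup X]
  [ContinuousSMul ℝ X] [LocallyConvexSpace ℝ X]
  [AddCommGroup Y] [Module ℝ Y] [TopologicalSpace Y] [IsTopologicalAddGroup Y]
  [ContinuousSMul ℝ Y] [LocallyConvexSpace ℝ Y]
  [AddCommGroup Z] [Module ℝ Z] [TopologicalSpace Z] [IsTopologicalAddGroup Z]
  [ContinuousSMul ℝ Z] [LocallyConvexSpace ℝ Z]

theorem exists_separation_of_notMem_closure_graph {f : X → Set Z}
    (hf : Convex ℝ {q : X × Z | q.2 ∈ f q.1}) {x : X} {z : Z}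
    (hz : (x, z) ∉ closure {q : X × Z | q.2 ∈ f q.1}) :
    ∃ (x' : X →L[ℝ] ℝ) (z' : Z →L[ℝ] ℝ) (c : ℝ),
      (∀ u, ∀ v ∈ f u, c ≤ z' v - x' u) ∧ z' z - x' x < c := by
  obtain ⟨Λ, c, hΛ, hΛz⟩ := geometric_hahn_banach_closed_point hf.closure isClosed_closure hz
  have hsplit (q : X × Z) := (Λ.comp_inl_add_comp_inr q).symm
  refine ⟨Λ.comp (.inl ℝ X Z), -Λ.comp (.inr ℝ X Z), -c, fun u v hv => ?_, ?_⟩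
  · have := hΛ (u, v) (subset_closure hv)
    rw [hsplit] at this
    simp only [neg_apply]
    linarith
  · rw [hsplit] at hΛz
    simp only [neg_apply]
    linarith

theorem exists_nonvertical_minorant {f : X → Set Z} (hf : Convex ℝ {q : X × Z | q.2 ∈ f q.1})
    {x₀ : X} {v₀ : Z} (hv₀ : v₀ ∈ f x₀) (hcl : ∃ z, (x₀, z) ∉ closure {q : X × Z | q.2 ∈ f q.1}) :
    ∃ (x' : X →L[ℝ] ℝ) (z' : Z →L[ℝ] ℝ) (c : ℝ), (∀ u, ∀ v ∈ f u, c ≤ z' v - x' u) ∧ z' ≠ 0 := by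
  obtain ⟨z, hz⟩ := hcl
  obtain ⟨x', z', c, hc, hlt⟩ := exists_separation_of_notMem_closure_graph hf hz
  refine ⟨x', z', c, hc, ?_⟩
  rintro rfl
  have := hc x₀ v₀ hv₀
  simp only [zero_apply] at this hlt
  linarith

theorem exists_nonvertical_separation {f : X → Set Z} (hf : Convex ℝ {q : X × Z | q.2 ∈ f q.1})
    {x₂ : X →L[ℝ] ℝ} {z₂ : Z →L[ℝ] ℝ} {c₂ : ℝ} (hc₂ : ∀ u, ∀ v ∈ f u, c₂ ≤ z₂ v - x₂ u)
    (hz₂ : z₂ ≠ 0) {x : X} {z : Z} (hz : (x, z) ∉ closure {q : X × Z | q.2 ∈ f q.1}) :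
    ∃ (x' : X →L[ℝ] ℝ) (z' : Z →L[ℝ] ℝ) (c : ℝ),
      (∀ u, ∀ v ∈ f u, c ≤ z' v - x' u) ∧ z' ≠ 0 ∧ z' z - x' x < c := by
  obtain ⟨x₁, z₁, c₁, hc₁, hlt₁⟩ := exists_separation_of_notMem_closure_graph hf hz
  rcases ne_or_eq z₁ 0 with hz₁ | rfl
  · exact ⟨x₁, z₁, c₁, hc₁, hz₁, hlt₁⟩
  simp only [zero_apply, zero_sub] at hc₁ hlt₁
  set E := z₂ z - x₂ x - c₂
  set s := (|E| + 1) / (c₁ + x₁ x)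
  have hpos : 0 < c₁ + x₁ x := by linarith
  have hs : 0 ≤ s := by positivity
  have hsE : s * (c₁ + x₁ x) = |E| + 1 := div_mul_cancel₀ _ hpos.ne'
  refine ⟨x₂ + s • x₁, z₂, c₂ + s * c₁, fun u v hv => ?_, hz₂, ?_⟩
  · have := mul_le_mul_of_nonneg_left (hc₁ u v hv) hs
    simp only [add_apply, smul_apply, smul_eq_mul]
    linarith [hc₂ u v hv]
  · simp only [add_apply, smul_apply, smul_eq_mul]
    linarith [le_abs_self E]

theorem fenchel_moreau_set_valued_general
    (C : Set Z) (hCcone : ∀ t : ℝ, 0 < t → ∀ z ∈ C, t • z ∈ C)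
    (f : X → Set Z)
    (hfconv : Convex ℝ {q : X × Z | q.2 ∈ f q.1})
    (hfG : ∀ x, f x = closure (convexHull ℝ (f x + C)))
    (hx0 : ∃ x0 : X, (f x0).Nonempty)
    (hclf : ∀ x : X, {z : Z | (x, z) ∈ closure {q : X × Z | q.2 ∈ f q.1}} ≠ univ) :
    ∀ x : X,
      {z : Z | (x, z) ∈ closure {q : X × Z | q.2 ∈ f q.1}}
        = ⋂ (x' : X →L[ℝ] ℝ), ⋂ z' ∈ posDual C \ {0},
            (closure (⋃ u : X, (f u + SMap x' z' (-u))) + SMap x' z' x) := by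
  obtain ⟨x₀, v₀, hv₀⟩ := hx0
  have hfC (u : X) : f u + C ⊆ f u :=
    ((subset_convexHull ℝ _).trans subset_closure).trans (hfG u).ge
  obtain ⟨x₂, z₂, c₂, hc₂, hz₂⟩ := exists_nonvertical_minorant hfconv hv₀
    (by simpa [eq_univ_iff_forall] using hclf x₀)
  intro x
  ext z
  simp only [mem_iInter]
  refine ⟨fun hz x' z' hz' => mem_negFenchelConj_add_SMap hz'.2 hz, fun hz => ?_⟩
  by_contra hzn
  obtain ⟨x', z', c, hc, hz', hlt⟩ := exists_nonvertical_separation hfconv hc₂ hz₂ hzn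
  have hdual : z' ∈ posDual C := mem_posDual_of_bddBelow hCcone (hfC x₀) hv₀
    ⟨c + x' x₀, forall_mem_image.2 fun v hv => by linarith [hc x₀ v hv]⟩
  linarith [le_of_mem_negFenchelConj_add_SMap hc (hz x' z' ⟨hdual, hz'⟩)]

/-- **Set-valued Fenchel–Moreau theorem.** Let `f : X → P(Z)` be convex (convex graph) with
`f(x) ∈ G(Z,C)` for all `x`, such that `f(x₀) ≠ ∅` for some `x₀` and `(cl f)(x) ≠ Z` for all
`x`. Then `cl f = f**`: for every `x`,
`{z | (x,z) ∈ cl(graph f)} = ⋂_{(x*,z*) ∈ X*×(C⁺∖{0})} [−f*(x*,z*) + S_{(x*,z*)}(x)]`,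
where `−f*(x*,z*) = cl ⋃_u [f(u) + S_{(x*,z*)}(−u)]`. -/
theorem fenchel_moreau_set_valued
    (C : Set Z) (hCconv : Convex ℝ C) (hCcone : ∀ t : ℝ, 0 < t → ∀ z ∈ C, t • z ∈ C)
    (hC0 : (0 : Z) ∈ C)
    (f : X → Set Z)
    (hfconv : Convex ℝ {q : X × Z | q.2 ∈ f q.1})
    (hfG : ∀ x, f x = closure (convexHull ℝ (f x + C)))
    (hx0 : ∃ x0 : X, (f x0).Nonempty)
    (hclf : ∀ x : X, {z : Z | (x, z) ∈ closure {q : X × Z | q.2 ∈ f q.1}} ≠ univ) :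
    ∀ x : X,
      {z : Z | (x, z) ∈ closure {q : X × Z | q.2 ∈ f q.1}}
        = ⋂ (x' : X →L[ℝ] ℝ), ⋂ z' ∈ posDual C \ {0},
            (closure (⋃ u : X, (f u + SMap x' z' (-u))) + SMap x' z' x) :=
  fenchel_moreau_set_valued_general C hCcone f hfconv hfG hx0 hclf
end
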